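/- arXiv:1312.0669 — 4 statements merged into one kernel-verified Lean document; each statement's English description precedes it below -/
import Mathlib

section
/- Let X and Y be Hausdorff topological spaces, f : X → X and g : Y → Y perfect mappings. If there exists a perfect continuous surjection h : X → Y such that h ∘ f = g ∘ h, then c(f) ≥ c(g). Consequently, if h is moreover a homeomorphism (a topological conjugation), then c(f) = c(g). -/
open Set Filter Topology ENNReal

section Defs

variable {X Y : Type*}

/-- An open set with compact complement. -/
def IsCoCompactOpen [TopologicalSpace X] (U : Set X) : Prop :=
  IsOpen U ∧ IsCompact Uᶜ

/-- A co-compact open cover: every member is co-compact open, and the family covers `X`. -/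
def IsCoCompactCover [TopologicalSpace X] (𝒰 : Set (Set X)) : Prop :=
  (∀ U ∈ 𝒰, IsCoCompactOpen U) ∧ ⋃₀ 𝒰 = Set.univ

/-- A perfect map: continuous, closed, with compact fibers. -/
def IsPerfectMap [TopologicalSpace X] [TopologicalSpace Y] (f : X → Y) : Prop :=
  Continuous f ∧ IsClosedMap f ∧ ∀ y : Y, IsCompact (f ⁻¹' {y})

/-- `coverN 𝒰` : the minimal cardinality of a finite subcover of `𝒰`. -/
noncomputable def coverN (𝒰 : Set (Set X)) : ℕ :=
  sInf {n | ∃ 𝒱 : Finset (Set X), ↑𝒱 ⊆ 𝒰 ∧ ⋃₀ (𝒱 : Set (Set X)) = Set.univ ∧ 𝒱.card = n}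

/-- `H(𝒰) = log N(𝒰)`, as a real number. -/
noncomputable def covHR (𝒰 : Set (Set X)) : ℝ :=
  Real.log (coverN 𝒰)

/-- `H(𝒰) = log N(𝒰)`, as an extended nonnegative real. -/
noncomputable def covH (𝒰 : Set (Set X)) : ℝ≥0∞ :=
  ENNReal.ofReal (Real.log (coverN 𝒰))

/-- The join `𝒰 ∨ 𝒱 = {U ∩ V : U ∈ 𝒰, V ∈ 𝒱}` of two covers. -/
def covJoin (𝒰 𝒱 : Set (Set X)) : Set (Set X) :=
  Set.image2 (· ∩ ·) 𝒰 𝒱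

/-- The preimage cover `f⁻¹(𝒰) = {f⁻¹(U) : U ∈ 𝒰}`. -/
def preimCover (f : X → Y) (𝒰 : Set (Set Y)) : Set (Set X) :=
  (fun U => f ⁻¹' U) '' 𝒰

/-- The iterated join `⋁_{i=0}^{n-1} f⁻ⁱ(𝒰)`. -/
def iterJoin (f : X → X) (𝒰 : Set (Set X)) (n : ℕ) : Set (Set X) :=
  {W | ∃ u : Fin n → Set X, (∀ i, u i ∈ 𝒰) ∧ W = ⋂ i : Fin n, f^[(i : ℕ)] ⁻¹' u i}

/-- The co-compact entropy of `f` relative to the cover `𝒰`: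
`c(f,𝒰) = lim_n (1/n) H(⋁_{i=0}^{n-1} f⁻ⁱ(𝒰))` (realized as a `limsup`). -/
noncomputable def cEntCover (f : X → X) (𝒰 : Set (Set X)) : ℝ≥0∞ :=
  Filter.atTop.limsup fun n : ℕ => covH (iterJoin f 𝒰 n) / (n : ℝ≥0∞)

/-- The co-compact entropy `c(f) = sup_𝒰 c(f,𝒰)` over all co-compact open covers. -/
noncomputable def cEnt [TopologicalSpace X] (f : X → X) : ℝ≥0∞ :=
  ⨆ (𝒰 : Set (Set X)) (_ : IsCoCompactCover 𝒰), cEntCover f 𝒰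

end Defs

section MetricDefs

variable {X : Type*}

/-- `E` is `(n,ε)`-separated for `f` w.r.t. the distance function `d`. -/
def IsNSepSet (d : X → X → ℝ) (f : X → X) (n : ℕ) (ε : ℝ) (E : Set X) : Prop :=
  ∀ x ∈ E, ∀ y ∈ E, x ≠ y → ∃ j < n, ε < d (f^[j] x) (f^[j] y)

/-- `s_n(ε,K,f)`: the maximal cardinality of an `(n,ε)`-separated subset of `K`. -/
noncomputable def sepCard (d : X → X → ℝ) (f : X → X) (n : ℕ) (ε : ℝ) (K : Set X) : ℝ≥0∞ :=
  ⨆ (E : Finset X) (_ : ↑E ⊆ K ∧ IsNSepSet d f n ε ↑E), (E.card : ℝ≥0∞)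

/-- Logarithm on `ℝ≥0∞`, with `elog ⊤ = ⊤`, truncated at `0` below. -/
noncomputable def elog (x : ℝ≥0∞) : ℝ≥0∞ :=
  if x = ⊤ then ⊤ else ENNReal.ofReal (Real.log x.toReal)

/-- `s(ε,K,f) = limsup_n (1/n) log s_n(ε,K,f)`. -/
noncomputable def sepEntEps (d : X → X → ℝ) (f : X → X) (ε : ℝ) (K : Set X) : ℝ≥0∞ :=
  Filter.atTop.limsup fun n : ℕ => elog (sepCard d f n ε K) / (n : ℝ≥0∞)

/-- `s(K,f) = lim_{ε→0} s(ε,K,f)` (the limit of the monotone family, i.e. the supremum). -/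
noncomputable def sepEnt (d : X → X → ℝ) (f : X → X) (K : Set X) : ℝ≥0∞ :=
  ⨆ (ε : ℝ) (_ : 0 < ε), sepEntEps d f ε K

/-- Bowen's entropy `h_d(f) = sup_K s(K,f)`, supremum over compact subsets. -/
noncomputable def bowenEnt [TopologicalSpace X] (d : X → X → ℝ) (f : X → X) : ℝ≥0∞ :=
  ⨆ (K : Set X) (_ : IsCompact K), sepEnt d f K

/-- The `d`-entropy `h^d(f) = s(X,f)`. -/
noncomputable def dEnt (d : X → X → ℝ) (f : X → X) : ℝ≥0∞ :=
  sepEnt d f Set.univ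

/-- A metric space structure on `X` is of compact type (relative to the ambient topology on
`X`) if it extends to a metric on the one-point compactification `OnePoint X` inducing the
topology of `OnePoint X`. -/
def IsCompactTypeMetric [TopologicalSpace X] (m : MetricSpace X) : Prop :=
  ∃ mc : MetricSpace (OnePoint X),
    mc.toUniformSpace.toTopologicalSpace = (inferInstance : TopologicalSpace (OnePoint X)) ∧
    ∀ x y : X, mc.dist ↑x ↑y = m.dist x y

/-- The extension of `f : X → X` to the one-point compactification, fixing `∞`. -/
def onePointExtend (f : X → X) : OnePoint X → OnePoint X :=
  fun p => Option.rec OnePoint.infty (fun x => (↑(f x) : OnePoint X)) p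

end MetricDefs

section MeasureDefs

open MeasureTheory

variable {X : Type*}

/-- A finite Borel partition of `X`. -/
def IsFinBorelPartition [MeasurableSpace X] (P : Finset (Set X)) : Prop :=
  (∀ A ∈ P, MeasurableSet A) ∧ ⋃₀ (P : Set (Set X)) = Set.univ ∧
    ∀ A ∈ P, ∀ B ∈ P, A ≠ B → A ∩ B = ∅

/-- `φ(x) = -x log x` (with `φ(0) = 0`). -/
noncomputable def phiEnt (x : ℝ) : ℝ := -(x * Real.log x)

/-- `H_μ(⋁_{i=0}^{n-1} f⁻ⁱ𝒜) = Σ_{B} φ(μ(B))`, the sum over the cells of the iterated join of the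
partition `P` (cells indexed by tuples of members of `P`; repeated empty cells contribute `0`). -/
noncomputable def partEntSum [MeasurableSpace X] (μ : Measure X) (f : X → X)
    (P : Finset (Set X)) (n : ℕ) : ℝ :=
  ∑ u : Fin n → {A // A ∈ P}, phiEnt ((μ (⋂ i : Fin n, f^[(i : ℕ)] ⁻¹' (u i : Set X))).toReal)

/-- The measure-theoretic (Kolmogorov–Sinai) entropy `h_μ(f)`. -/
noncomputable def measEnt [MeasurableSpace X] (μ : Measure X) (f : X → X) : ℝ≥0∞ :=
  ⨆ (P : Finset (Set X)) (_ : IsFinBorelPartition P),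
    Filter.atTop.limsup fun n : ℕ => ENNReal.ofReal (partEntSum μ f P n) / (n : ℝ≥0∞)

end MeasureDefs

/-!
Pulling a cover back along `h` is the whole argument: since `h` is proper, `h⁻¹(𝒰)` is again a
co-compact open cover; since `h` is onto, `N(h⁻¹(𝒰)) = N(𝒰)`; and since `h ∘ f = g ∘ h`, pulling
back commutes with iterated joins. Hence `c(g, 𝒰) = c(f, h⁻¹(𝒰)) ≤ c(f)`. For a homeomorphism,
apply this to `h⁻¹` as well.
-/

section Semiconj

variable {X Y : Type*}

lemma IsPerfectMap.isProperMap [TopologicalSpace X] [TopologicalSpace Y] {h : X → Y}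
    (hh : IsPerfectMap h) : IsProperMap h :=
  isProperMap_iff_isClosedMap_and_compact_fibers.mpr hh

lemma IsCoCompactCover.preimage [TopologicalSpace X] [TopologicalSpace Y] {h : X → Y}
    (hh : IsProperMap h) {𝒰 : Set (Set Y)} (h𝒰 : IsCoCompactCover 𝒰) :
    IsCoCompactCover (preimCover h 𝒰) := by
  refine ⟨?_, by rw [preimCover, sUnion_image, ← preimage_sUnion, h𝒰.2, preimage_univ]⟩
  rintro _ ⟨U, hU, rfl⟩
  exact ⟨(h𝒰.1 U hU).1.preimage hh.continuous, hh.isCompact_preimage (h𝒰.1 U hU).2⟩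

/-- Since `h` is onto, `U ↦ h ⁻¹' U` is injective, so finite subcovers of `𝒰` and of
`preimCover h 𝒰` correspond bijectively, with the same cardinalities. -/
lemma coverN_preimCover {h : X → Y} (hsurj : Function.Surjective h) (𝒰 : Set (Set Y)) :
    coverN (preimCover h 𝒰) = coverN 𝒰 := by
  classical
  have hinj : Function.Injective (preimage h) := preimage_injective.mpr hsurj
  unfold coverN
  congr 1
  ext n
  constructor
  · rintro ⟨𝒲, h𝒲, hcov, rfl⟩
    obtain ⟨𝒱, h𝒱, rfl⟩ := Finset.subset_set_image_iff.mp h𝒲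
    rw [Finset.coe_image, sUnion_image, ← preimage_sUnion, preimage_eq_univ_iff,
      hsurj.range_eq, univ_subset_iff] at hcov
    exact ⟨𝒱, h𝒱, hcov, (Finset.card_image_of_injective 𝒱 hinj).symm⟩
  · rintro ⟨𝒱, h𝒱, hcov, rfl⟩
    refine ⟨𝒱.image (preimage h), ?_, ?_, Finset.card_image_of_injective 𝒱 hinj⟩
    · rw [Finset.coe_image]
      exact image_mono h𝒱
    · rw [Finset.coe_image, sUnion_image, ← preimage_sUnion, hcov, preimage_univ]

lemma iterJoin_preimCover {f : X → X} {g : Y → Y} {h : X → Y} (hsc : Function.Semiconj h f g)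
    (𝒰 : Set (Set Y)) (n : ℕ) :
    iterJoin f (preimCover h 𝒰) n = preimCover h (iterJoin g 𝒰 n) := by
  have hcomm (i : ℕ) (s : Set Y) : f^[i] ⁻¹' (h ⁻¹' s) = h ⁻¹' (g^[i] ⁻¹' s) := by
    simp only [← preimage_comp, (hsc.iterate_right i).comp_eq]
  ext W
  constructor
  · rintro ⟨u, hu, rfl⟩
    choose v hv hvu using hu
    refine ⟨_, ⟨v, hv, rfl⟩, ?_⟩
    simp only [preimage_iInter, ← hvu, hcomm]
  · rintro ⟨-, ⟨v, hv, rfl⟩, rfl⟩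
    exact ⟨fun i => h ⁻¹' v i, fun i => mem_image_of_mem _ (hv i), by
      simp only [preimage_iInter, hcomm]⟩

lemma cEntCover_preimCover {f : X → X} {g : Y → Y} {h : X → Y}
    (hsurj : Function.Surjective h) (hsc : Function.Semiconj h f g) (𝒰 : Set (Set Y)) :
    cEntCover f (preimCover h 𝒰) = cEntCover g 𝒰 := by
  simp only [cEntCover, covH, iterJoin_preimCover hsc, coverN_preimCover hsurj]

lemma cEnt_le_of_semiconj [TopologicalSpace X] [TopologicalSpace Y] {f : X → X} {g : Y → Y}
    {h : X → Y} (hh : IsProperMap h) (hsurj : Function.Surjective h)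
    (hsc : Function.Semiconj h f g) : cEnt g ≤ cEnt f :=
  iSup₂_le fun 𝒰 h𝒰 => cEntCover_preimCover hsurj hsc 𝒰 ▸
    le_iSup₂ (f := fun 𝒱 (_ : IsCoCompactCover 𝒱) => cEntCover f 𝒱) _ (h𝒰.preimage hh)

end Semiconj

theorem cEnt_of_semiconj_general {X Y : Type*} [TopologicalSpace X] [TopologicalSpace Y]
    (f : X → X) (g : Y → Y)
    (h : X → Y) (hperf : IsPerfectMap h) (hsurj : Function.Surjective h)
    (hconj : h ∘ f = g ∘ h) :
    cEnt g ≤ cEnt f ∧ ((∃ e : X ≃ₜ Y, ⇑e = h) → cEnt f = cEnt g) := by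
  have hsc : Function.Semiconj h f g := Function.semiconj_iff_comp_eq.mpr hconj
  refine ⟨cEnt_le_of_semiconj hperf.isProperMap hsurj hsc, ?_⟩
  rintro ⟨e, rfl⟩
  have hsc_symm : Function.Semiconj e.symm g f :=
    hsc.inverse_left e.symm_apply_apply e.apply_symm_apply
  exact le_antisymm (cEnt_le_of_semiconj e.symm.isProperMap e.symm.surjective hsc_symm)
    (cEnt_le_of_semiconj hperf.isProperMap hsurj hsc)

/-- If `h` is a perfect continuous surjection semiconjugating the perfect maps `f`
and `g` (i.e. `h ∘ f = g ∘ h`), then `c(g) ≤ c(f)`; if `h` is moreover a homeomorphism, then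
`c(f) = c(g)`. -/
theorem cEnt_of_semiconj {X Y : Type*} [TopologicalSpace X] [TopologicalSpace Y]
    [T2Space X] [T2Space Y] (f : X → X) (g : Y → Y)
    (hf : IsPerfectMap f) (hg : IsPerfectMap g)
    (h : X → Y) (hperf : IsPerfectMap h) (hsurj : Function.Surjective h)
    (hconj : h ∘ f = g ∘ h) :
    cEnt g ≤ cEnt f ∧ ((∃ e : X ≃ₜ Y, ⇑e = h) → cEnt f = cEnt g) :=
  cEnt_of_semiconj_general f g h hperf hsurj hconj
end

section
/- Let X be a Hausdorff topological space and f : X → X a perfect mapping. If Λ ⊆ X is a closed subset invariant under f (i.e., f(Λ) ⊆ Λ), then the co-compact entropy of the restriction f|_Λ : Λ → Λ satisfies c(f|_Λ) ≤ c(f). -/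
open Set Filter Topology ENNReal

/-! A co-compact open cover `𝒰` of `Λ` extends to the co-compact open cover of `X` formed by the
sets `X ∖ (Λ ∖ U)`, `U ∈ 𝒰`; here `Λ ∖ U` is compact in `X`, hence closed since `X` is Hausdorff.
The `n`-th iterated join for `f|_Λ` contains the traces on `Λ` of the members of the `n`-th
iterated join for `f`, and every finite subcover of the latter traces out a subcover of the
former, so `N` and hence `c(·,·)` can only drop under restriction. -/

section CoverRestriction

variable {X Y : Type*}

def HasFiniteSubcover (𝒰 : Set (Set X)) : Prop :=
  ∃ 𝒱 : Finset (Set X), ↑𝒱 ⊆ 𝒰 ∧ ⋃₀ (𝒱 : Set (Set X)) = univ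

theorem IsCoCompactCover.hasFiniteSubcover [TopologicalSpace X] {𝒰 : Set (Set X)}
    (h : IsCoCompactCover 𝒰) : HasFiniteSubcover 𝒰 := by
  classical
  rcases 𝒰.eq_empty_or_nonempty with rfl | ⟨U, hU⟩
  · exact ⟨∅, by simp, by simpa using h.2⟩
  obtain ⟨𝒱, h𝒱𝒰, h𝒱fin, h𝒱cov⟩ := (h.1 U hU).2.elim_finite_subcover_image (c := fun V => V)
    (fun V hV => (h.1 V hV).1) (by rw [← sUnion_eq_biUnion, h.2]; exact subset_univ _)
  refine ⟨insert U h𝒱fin.toFinset, ?_, eq_univ_of_forall fun x => ?_⟩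
  · simpa [insert_subset_iff] using ⟨hU, h𝒱𝒰⟩
  · by_cases hx : x ∈ U
    · exact ⟨U, by simp, hx⟩
    · obtain ⟨V, hV, hxV⟩ := mem_iUnion₂.mp (h𝒱cov hx)
      exact ⟨V, by simp [hV], hxV⟩

theorem iterJoin_eq_range (f : X → X) (𝒰 : Set (Set X)) (n : ℕ) :
    iterJoin f 𝒰 n = range fun u : Fin n → 𝒰 => ⋂ i : Fin n, f^[(i : ℕ)] ⁻¹' (u i : Set X) := by
  ext W
  constructor
  · rintro ⟨u, hu, rfl⟩
    exact ⟨fun i => ⟨u i, hu i⟩, rfl⟩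
  · rintro ⟨u, rfl⟩
    exact ⟨fun i => u i, fun i => (u i).2, rfl⟩

theorem iterJoin_mono (f : X → X) {𝒱 𝒰 : Set (Set X)} (h : 𝒱 ⊆ 𝒰) (n : ℕ) :
    iterJoin f 𝒱 n ⊆ iterJoin f 𝒰 n := by
  rintro W ⟨u, hu, rfl⟩
  exact ⟨u, fun i => h (hu i), rfl⟩

theorem sUnion_iterJoin (f : X → X) {𝒰 : Set (Set X)} (h : ⋃₀ 𝒰 = univ) (n : ℕ) :
    ⋃₀ iterJoin f 𝒰 n = univ := by
  refine eq_univ_of_forall fun x => ?_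
  have hcov : ∀ i : Fin n, ∃ U ∈ 𝒰, f^[(i : ℕ)] x ∈ U := fun i => mem_sUnion.mp (h ▸ mem_univ _)
  choose u hu hxu using hcov
  exact ⟨_, ⟨u, hu, rfl⟩, mem_iInter.mpr hxu⟩

theorem HasFiniteSubcover.iterJoin {𝒰 : Set (Set X)} (h : HasFiniteSubcover 𝒰) (f : X → X)
    (n : ℕ) : HasFiniteSubcover (iterJoin f 𝒰 n) := by
  obtain ⟨𝒱, h𝒱𝒰, h𝒱cov⟩ := h
  have hfin : (_root_.iterJoin f ↑𝒱 n).Finite := iterJoin_eq_range f _ n ▸ finite_range _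
  exact ⟨hfin.toFinset, by simpa using iterJoin_mono f h𝒱𝒰 n,
    by simpa using sUnion_iterJoin f h𝒱cov n⟩

theorem HasFiniteSubcover.exists_card_eq_coverN {𝒰 : Set (Set X)} (h : HasFiniteSubcover 𝒰) :
    ∃ 𝒱 : Finset (Set X), ↑𝒱 ⊆ 𝒰 ∧ ⋃₀ (𝒱 : Set (Set X)) = univ ∧ 𝒱.card = coverN 𝒰 := by
  obtain ⟨𝒱, h𝒱𝒰, h𝒱cov⟩ := h
  exact Nat.sInf_mem (s := {n | ∃ 𝒱 : Finset (Set X), ↑𝒱 ⊆ 𝒰 ∧ ⋃₀ (𝒱 : Set (Set X)) = univ ∧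
    𝒱.card = n}) ⟨_, 𝒱, h𝒱𝒰, h𝒱cov, rfl⟩

theorem coverN_le_card {𝒰 : Set (Set X)} {𝒱 : Finset (Set X)} (h𝒱𝒰 : ↑𝒱 ⊆ 𝒰)
    (h𝒱cov : ⋃₀ (𝒱 : Set (Set X)) = univ) : coverN 𝒰 ≤ 𝒱.card :=
  Nat.sInf_le ⟨𝒱, h𝒱𝒰, h𝒱cov, rfl⟩

theorem coverN_le_of_preimCover_subset (φ : X → Y) {𝒱 : Set (Set X)} {𝒲 : Set (Set Y)}
    (h𝒲 : HasFiniteSubcover 𝒲) (h : preimCover φ 𝒲 ⊆ 𝒱) : coverN 𝒱 ≤ coverN 𝒲 := by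
  classical
  obtain ⟨𝒲₀, h𝒲₀, h𝒲₀cov, h𝒲₀card⟩ := h𝒲.exists_card_eq_coverN
  refine (coverN_le_card (𝒱 := 𝒲₀.image (φ ⁻¹' ·)) ?_ ?_).trans
    (h𝒲₀card ▸ Finset.card_image_le)
  · intro V hV
    obtain ⟨W, hW, rfl⟩ := Finset.mem_image.mp hV
    exact h ⟨W, h𝒲₀ hW, rfl⟩
  · rw [Finset.coe_image, sUnion_image, ← preimage_iUnion₂, ← sUnion_eq_biUnion, h𝒲₀cov,
      preimage_univ]

theorem covH_le_covH {𝒱 : Set (Set X)} {𝒲 : Set (Set Y)} (h : coverN 𝒱 ≤ coverN 𝒲) :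
    covH 𝒱 ≤ covH 𝒲 := by
  refine ENNReal.ofReal_le_ofReal ?_
  rcases (coverN 𝒱).eq_zero_or_pos with h0 | hpos
  · simpa [h0] using Real.log_natCast_nonneg _
  · exact Real.log_le_log (by exact_mod_cast hpos) (by exact_mod_cast h)

theorem cEntCover_le_cEntCover {g : X → X} {f : Y → Y} {𝒱 : Set (Set X)} {𝒰 : Set (Set Y)}
    (h : ∀ n, covH (iterJoin g 𝒱 n) ≤ covH (iterJoin f 𝒰 n)) :
    cEntCover g 𝒱 ≤ cEntCover f 𝒰 :=
  limsup_le_limsup (Eventually.of_forall fun n => ENNReal.div_le_div_right (h n) _)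

theorem cEntCover_eq_zero_of_isEmpty [IsEmpty X] (f : X → X) (𝒰 : Set (Set X)) : cEntCover f 𝒰 = 0 := by
  have hN (n : ℕ) : coverN (iterJoin f 𝒰 n) = 0 :=
    Nat.sInf_eq_zero.mpr (.inl ⟨∅, by simp, by simp [eq_empty_of_isEmpty univ], rfl⟩)
  simp [cEntCover, covH, hN]

section Extension

variable {Λ : Set X}

/-- The largest subset of `X` whose trace on `Λ` is `U`, namely `X ∖ (Λ ∖ U)`. -/
def coExtend (U : Set Λ) : Set X :=
  (Subtype.val '' Uᶜ)ᶜ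

@[simp]
theorem coe_mem_coExtend {U : Set Λ} {x : Λ} : (x : X) ∈ coExtend U ↔ x ∈ U := by
  simp [coExtend]

theorem IsCoCompactOpen.coExtend [TopologicalSpace X] [T2Space X] {U : Set Λ}
    (hU : IsCoCompactOpen U) : IsCoCompactOpen (coExtend U) := by
  have hK : IsCompact (Subtype.val '' Uᶜ) := hU.2.image continuous_subtype_val
  exact ⟨hK.isClosed.isOpen_compl, by simpa [_root_.coExtend] using hK⟩

theorem IsCoCompactCover.image_coExtend [TopologicalSpace X] [T2Space X] {𝒰 : Set (Set Λ)}
    (h : IsCoCompactCover 𝒰) (hne : 𝒰.Nonempty) : IsCoCompactCover (coExtend '' 𝒰) := by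
  refine ⟨forall_mem_image.mpr fun U hU => (h.1 U hU).coExtend, eq_univ_of_forall fun x => ?_⟩
  by_cases hx : x ∈ Λ
  · obtain ⟨U, hU, hxU⟩ : (⟨x, hx⟩ : Λ) ∈ ⋃₀ 𝒰 := h.2 ▸ mem_univ _
    exact ⟨_, mem_image_of_mem _ hU, coe_mem_coExtend.mpr hxU⟩
  · obtain ⟨U, hU⟩ := hne
    exact ⟨_, mem_image_of_mem _ hU, fun ⟨y, _, hy⟩ => hx (hy ▸ y.2)⟩

theorem preimCover_val_iterJoin_coExtend_subset {f : X → X} (hf : MapsTo f Λ Λ)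
    (𝒰 : Set (Set Λ)) (n : ℕ) :
    preimCover Subtype.val (iterJoin f (coExtend '' 𝒰) n) ⊆ iterJoin hf.restrict 𝒰 n := by
  rintro _ ⟨_, ⟨u, hu, rfl⟩, rfl⟩
  choose v hv hvu using hu
  refine ⟨v, hv, ?_⟩
  ext x
  simp [← hvu, ← hf.coe_iterate_restrict]

end Extension

end CoverRestriction

theorem cEnt_restrict_le_general {X : Type*} [TopologicalSpace X] [T2Space X]
    (f : X → X) (Λ : Set X)
    (hinv : Set.MapsTo f Λ Λ) :
    cEnt (Set.MapsTo.restrict f Λ Λ hinv) ≤ cEnt f := by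
  refine iSup₂_le fun 𝒰 h𝒰 => ?_
  rcases 𝒰.eq_empty_or_nonempty with rfl | hne
  · have : IsEmpty Λ := univ_eq_empty_iff.mp (by simpa using h𝒰.2.symm)
    simp [cEntCover_eq_zero_of_isEmpty]
  have hcc := h𝒰.image_coExtend hne
  refine le_trans ?_ (le_iSup₂ (f := fun 𝒱 (_ : IsCoCompactCover 𝒱) => cEntCover f 𝒱) _ hcc)
  exact cEntCover_le_cEntCover fun n => covH_le_covH <|
    coverN_le_of_preimCover_subset _ (hcc.hasFiniteSubcover.iterJoin f n)
      (preimCover_val_iterJoin_coExtend_subset hinv 𝒰 n)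

/-- If `Λ` is closed and `f(Λ) ⊆ Λ` for a perfect map `f` on a Hausdorff space,
then the co-compact entropy of the restriction `f|_Λ : Λ → Λ` is at most `c(f)`. -/
theorem cEnt_restrict_le {X : Type*} [TopologicalSpace X] [T2Space X]
    (f : X → X) (hf : IsPerfectMap f) (Λ : Set X) (hΛ : IsClosed Λ)
    (hinv : Set.MapsTo f Λ Λ) :
    cEnt (Set.MapsTo.restrict f Λ Λ hinv) ≤ cEnt f :=
  cEnt_restrict_le_general f Λ hinv
end

section
/- Let X be a locally compact separable metric space and d a metric of compact type on X. Fix points x₁,…,x_k ∈ X and real numbers 0 < a < b, and suppose that for every δ ∈ (a,b) the family 𝒜_δ = {B(x₁,δ),…,B(x_k,δ)} of open d-balls is an open cover of X. Then there exists δ ∈ (a,b) and a co-compact open cover 𝒜(δ) of X of cardinality k, each of whose members is either one of the open balls B(x_i,δ) or the union of two of the open balls B(x_i,δ). -/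
open Set Filter Topology ENNReal

/-!
Let `ρ(y)` be the distance from `y` to `∞` in a metric on the one-point compactification
extending `d`. Then `d(y, z) ≤ ρ(y) + ρ(z)`, `ρ` is `1`-Lipschitz, and `ρ → 0` at infinity. If `X` is
not compact, points of `X` come arbitrarily close to `∞`, so some centre satisfies `ρ(x_{i₀}) ≤ δ₁`
for a radius `δ₁ ∈ (a, b)`. For `δ ∈ (δ₁, b)` every point outside `B(x_{i₀}, δ)` then stays at
distance at least `δ - δ₁` from `∞`, so this ball is co-compact, and the sets
`B(x_i, δ) ∪ B(x_{i₀}, δ)` form the required cover. If `X` is compact, the balls themselves do.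
-/

open Metric

section

variable {X : Type*}

theorem IsCoCompactOpen.of_subset [TopologicalSpace X] {U V : Set X} (hU : IsCoCompactOpen U)
    (hV : IsOpen V) (hUV : U ⊆ V) : IsCoCompactOpen V :=
  ⟨hV, hU.2.of_isClosed_subset hV.isClosed_compl (compl_subset_compl.mpr hUV)⟩

theorem IsOpen.isCoCompactOpen [TopologicalSpace X] [CompactSpace X] {U : Set X}
    (hU : IsOpen U) : IsCoCompactOpen U :=
  ⟨hU, hU.isClosed_compl.isCompact⟩

theorem IsCompactTypeMetric.exists_dist_infty [MetricSpace X]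
    (hd : IsCompactTypeMetric (X := X) ‹_›) :
    ∃ ρ : X → ℝ, (∀ y z, dist y z ≤ ρ y + ρ z) ∧ (∀ y z, ρ y ≤ dist y z + ρ z) ∧
      Tendsto ρ (cocompact X) (𝓝 0) := by
  obtain ⟨mc, hmc, hdist⟩ := hd
  refine ⟨fun y => mc.dist y OnePoint.infty, fun y z => ?_, fun y z => ?_, ?_⟩
  · rw [← hdist]
    exact (mc.dist_triangle _ OnePoint.infty _).trans_eq (congrArg _ (mc.dist_comm _ _))
  · rw [← hdist]
    exact mc.dist_triangle _ _ _
  · have h : Tendsto (fun p => mc.dist p OnePoint.infty)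
        (@nhds _ mc.toUniformSpace.toTopologicalSpace OnePoint.infty) (𝓝 0) := by
      let _ := mc
      exact tendsto_iff_dist_tendsto_zero.mp tendsto_id
    rw [hmc] at h
    exact (h.comp OnePoint.tendsto_coe_infty).mono_left cocompact_le_coclosedCompact

section DistToInfty

variable [PseudoMetricSpace X] {ρ : X → ℝ}

theorem isCompact_compl_ball_of_lt (hρ_dist : ∀ y z, dist y z ≤ ρ y + ρ z)
    (hρ : Tendsto ρ (cocompact X) (𝓝 0)) {c : X} {δ : ℝ} (hc : ρ c < δ) :
    IsCompact (ball c δ)ᶜ := by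
  obtain ⟨K, hK, hKρ⟩ := mem_cocompact.mp (hρ.eventually (gt_mem_nhds (sub_pos.mpr hc)))
  refine hK.of_isClosed_subset isOpen_ball.isClosed_compl fun y hy => ?_
  by_contra hyK
  have hfar : δ ≤ dist c y := not_lt.mp (mem_ball'.not.mp hy)
  have hnear : ρ y < δ - ρ c := hKρ hyK
  linarith [hρ_dist c y]

theorem exists_le_of_iUnion_ball_eq_univ [NoncompactSpace X] {ι : Type*} [Finite ι]
    (hρ_lip : ∀ y z, ρ y ≤ dist y z + ρ z) (hρ : Tendsto ρ (cocompact X) (𝓝 0))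
    {x : ι → X} {δ : ℝ} (hcov : ⋃ i, ball (x i) δ = univ) : ∃ i, ρ (x i) ≤ δ := by
  have hclose : ∀ ε > 0, ∃ i, ρ (x i) < δ + ε := fun ε hε => by
    obtain ⟨y, hy⟩ := (hρ.eventually (gt_mem_nhds hε)).exists
    obtain ⟨i, hi⟩ := mem_iUnion.mp (eq_univ_iff_forall.mp hcov y)
    exact ⟨i, by linarith [hρ_lip (x i) y, mem_ball'.mp hi]⟩
  have : Nonempty ι := ⟨(hclose 1 one_pos).choose⟩
  obtain ⟨i₀, hi₀⟩ := Finite.exists_min fun i => ρ (x i)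
  refine ⟨i₀, le_of_forall_pos_lt_add fun ε hε => ?_⟩
  obtain ⟨i, hi⟩ := hclose ε hε
  exact (hi₀ i).trans_lt hi

end DistToInfty

end

theorem cocompact_cover_of_ball_cover_general {X : Type*} [MetricSpace X]
    (hd : IsCompactTypeMetric (X := X) ‹MetricSpace X›)
    (k : ℕ) (x : Fin k → X) (a b : ℝ) (hab : a < b)
    (hcov : ∀ δ ∈ Set.Ioo a b, ⋃ i, Metric.ball (x i) δ = Set.univ) :
    ∃ δ ∈ Set.Ioo a b, ∃ 𝒜 : Fin k → Set X,
      (∀ i, IsCoCompactOpen (𝒜 i)) ∧ (⋃ i, 𝒜 i) = Set.univ ∧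
      ∀ i, (∃ j, 𝒜 i = Metric.ball (x j) δ) ∨
        (∃ j l, 𝒜 i = Metric.ball (x j) δ ∪ Metric.ball (x l) δ) := by
  obtain ⟨δ₁, ha₁, h₁b⟩ := exists_between hab
  obtain ⟨δ, h₁δ, hδb⟩ := exists_between h₁b
  have hδ : δ ∈ Ioo a b := ⟨ha₁.trans h₁δ, hδb⟩
  by_cases hX : CompactSpace X
  · exact ⟨δ, hδ, fun i => ball (x i) δ, fun i => isOpen_ball.isCoCompactOpen, hcov δ hδ,
      fun i => .inl ⟨i, rfl⟩⟩
  have : NoncompactSpace X := not_compactSpace_iff.mp hX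
  obtain ⟨ρ, hρ_dist, hρ_lip, hρ⟩ := hd.exists_dist_infty
  obtain ⟨i₀, hi₀⟩ := exists_le_of_iUnion_ball_eq_univ hρ_lip hρ (hcov δ₁ ⟨ha₁, h₁b⟩)
  have h₀ : IsCoCompactOpen (ball (x i₀) δ) :=
    ⟨isOpen_ball, isCompact_compl_ball_of_lt hρ_dist hρ (hi₀.trans_lt h₁δ)⟩
  refine ⟨δ, hδ, fun i => ball (x i) δ ∪ ball (x i₀) δ,
    fun i => h₀.of_subset (isOpen_ball.union isOpen_ball) subset_union_right,
    eq_univ_of_subset (iUnion_mono fun i => subset_union_left) (hcov δ hδ),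
    fun i => .inr ⟨i, i₀, rfl⟩⟩

/-- For a compact-type metric on a locally compact separable metric space `X`:
if for every `δ ∈ (a,b)` the balls `B(x₁,δ),…,B(x_k,δ)` cover `X`, then for some `δ ∈ (a,b)`
there is a co-compact open cover of `X` of cardinality `k` each member of which is either one
of the balls `B(x_i,δ)` or a union of two of them. -/
theorem cocompact_cover_of_ball_cover {X : Type*} [MetricSpace X] [LocallyCompactSpace X]
    [TopologicalSpace.SeparableSpace X]
    (hd : IsCompactTypeMetric (X := X) ‹MetricSpace X›)
    (k : ℕ) (x : Fin k → X) (a b : ℝ) (ha : 0 < a) (hab : a < b)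
    (hcov : ∀ δ ∈ Set.Ioo a b, ⋃ i, Metric.ball (x i) δ = Set.univ) :
    ∃ δ ∈ Set.Ioo a b, ∃ 𝒜 : Fin k → Set X,
      (∀ i, IsCoCompactOpen (𝒜 i)) ∧ (⋃ i, 𝒜 i) = Set.univ ∧
      ∀ i, (∃ j, 𝒜 i = Metric.ball (x j) δ) ∨
        (∃ j l, 𝒜 i = Metric.ball (x j) δ ∪ Metric.ball (x l) δ) :=
  cocompact_cover_of_ball_cover_general hd k x a b hab hcov
end

section
/- Let X be a locally compact separable metric space, f : X → X a perfect mapping such that the set of f-invariant Borel probability measures on X is nonempty, and let f̃ : X̃ → X̃ be the extension of f to the one-point compactification X̃ fixing the point at infinity. Then sup_μ h_μ(f) = sup_{μ̃} h_{μ̃}(f̃), where the suprema are taken over all f-invariant Borel probability measures μ on X and over all f̃-invariant Borel probability measures μ̃ on X̃, respectively. -/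
open Set Filter Topology ENNReal

/-!
An `f`-invariant probability measure `μ` on `X` pushes forward along `X ↪ X̃` to an
`f̃`-invariant one with at least the same entropy: the images of the cells of a partition of `X`,
together with `{∞}`, partition `X̃`, and the images of the cells of its joins are cells of the
joins upstairs, with the same measures.

Conversely let `ν` be `f̃`-invariant and `s = ν(X)`. If `s = 0` then `ν` is the Dirac mass at the
fixed point `∞` and has entropy zero. Otherwise `μ = s⁻¹ ν|_X` is an `f`-invariant probability
measure on `X`. Split every cell `C` of an `n`-fold join as `(C ∩ {∞}) ∪ (C \ {∞})`. Since `φ` is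
subadditive, `φ ≤ 1`, `φ(s q) ≤ φ(q) + q` and only one cell contains `∞`, the entropy sum of `ν`
exceeds that of `μ` for the pulled-back partition by at most `2`, which disappears after dividing
by `n`.
-/

section

open MeasureTheory Function

theorem phiEnt_eq_negMulLog : phiEnt = Real.negMulLog := by
  funext x
  simp [phiEnt, Real.negMulLog]

theorem phiEnt_nonneg {x : ℝ} (h0 : 0 ≤ x) (h1 : x ≤ 1) : 0 ≤ phiEnt x :=
  phiEnt_eq_negMulLog ▸ Real.negMulLog_nonneg h0 h1

theorem phiEnt_le_one {x : ℝ} (h0 : 0 ≤ x) : phiEnt x ≤ 1 := by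
  rw [phiEnt_eq_negMulLog]
  linarith [Real.negMulLog_le_one_sub_self h0]

theorem phiEnt_add_le {a b : ℝ} (ha : 0 ≤ a) (hb : 0 ≤ b) :
    phiEnt (a + b) ≤ phiEnt a + phiEnt b := by
  have mul_log_le {x : ℝ} (hx : 0 ≤ x) (hxy : x ≤ a + b) :
      x * Real.log x ≤ x * Real.log (a + b) := by
    rcases hx.eq_or_lt with rfl | hx
    · simp
    · exact mul_le_mul_of_nonneg_left (Real.log_le_log hx hxy) hx.le
  simp only [phiEnt]
  linarith [mul_log_le ha (by linarith), mul_log_le hb (by linarith)]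

theorem phiEnt_mul_le {s q : ℝ} (hs0 : 0 ≤ s) (hs1 : s ≤ 1) (hq0 : 0 ≤ q) (hq1 : q ≤ 1) :
    phiEnt (s * q) ≤ phiEnt q + q := by
  rw [phiEnt_eq_negMulLog, Real.negMulLog_mul]
  have hφs : s.negMulLog ≤ 1 := by linarith [Real.negMulLog_le_one_sub_self hs0]
  have hφq : 0 ≤ q.negMulLog := Real.negMulLog_nonneg hq0 hq1
  nlinarith

theorem Fintype.sum_comp_le_sum {α β : Type*} [Fintype α] [Fintype β] (e : α → β) {G : β → ℝ}
    (hG : ∀ b, 0 ≤ G b) (he : ∀ a a', G (e a) ≠ 0 → e a = e a' → a = a') :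
    ∑ a, G (e a) ≤ ∑ b, G b := by
  classical
  rw [← Finset.sum_filter_ne_zero, ← Finset.sum_image fun a ha a' _ h =>
    he a a' (Finset.mem_filter.1 ha).2 h]
  exact Finset.sum_le_sum_of_subset_of_nonneg (Finset.subset_univ _) fun b _ _ => hG b

theorem limsup_ofReal_div_le_of_le_add {a b : ℕ → ℝ} (C : ℝ) (h : ∀ n, a n ≤ b n + C) :
    atTop.limsup (fun n : ℕ => ENNReal.ofReal (a n) / n) ≤
      atTop.limsup (fun n : ℕ => ENNReal.ofReal (b n) / n) := by
  have hC : Tendsto (fun n : ℕ => ENNReal.ofReal C / n) atTop (𝓝 0) := by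
    simpa [div_eq_mul_inv] using
      ENNReal.Tendsto.const_mul ENNReal.tendsto_inv_nat_nhds_zero (.inr ofReal_ne_top)
  calc atTop.limsup (fun n : ℕ => ENNReal.ofReal (a n) / n)
      ≤ atTop.limsup (fun n : ℕ => ENNReal.ofReal (b n) / n + ENNReal.ofReal C / n) :=
        limsup_le_limsup (.of_forall fun n => by
          simp only [← ENNReal.add_div]
          exact ENNReal.div_le_div_right
            ((ofReal_le_ofReal (h n)).trans ofReal_add_le) _)
    _ = atTop.limsup (fun n : ℕ => ENNReal.ofReal (b n) / n) :=
        ENNReal.limsup_add_of_right_tendsto_zero hC _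

variable {X Y : Type*}

def joinCell (f : X → X) {n : ℕ} (u : Fin n → Set X) : Set X :=
  ⋂ i : Fin n, f^[i] ⁻¹' u i

theorem partEntSum_eq_sum_joinCell [MeasurableSpace X] (μ : Measure X) (f : X → X)
    (P : Finset (Set X)) (n : ℕ) :
    partEntSum μ f P n = ∑ u : Fin n → P, phiEnt (μ (joinCell f fun i => (u i : Set X))).toReal :=
  rfl

theorem measurableSet_joinCell [MeasurableSpace X] {f : X → X} (hf : Measurable f) {n : ℕ}
    {u : Fin n → Set X} (hu : ∀ i, MeasurableSet (u i)) : MeasurableSet (joinCell f u) :=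
  .iInter fun i => hf.iterate _ (hu i)

theorem disjoint_joinCell {f : X → X} {n : ℕ} {u v : Fin n → Set X} (i : Fin n)
    (h : Disjoint (u i) (v i)) : Disjoint (joinCell f u) (joinCell f v) :=
  (h.preimage _).mono (iInter_subset _ i) (iInter_subset _ i)

theorem preimage_joinCell {f : X → X} {F : Y → Y} {g : X → Y} (h : Semiconj g f F)
    {n : ℕ} (u : Fin n → Set Y) : g ⁻¹' joinCell F u = joinCell f fun i => g ⁻¹' u i := by
  simp only [joinCell, preimage_iInter, ← preimage_comp, (h.iterate_right _).comp_eq]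

theorem IsFinBorelPartition.exists_disjoint_of_ne [MeasurableSpace X] {P : Finset (Set X)}
    (hP : IsFinBorelPartition P) {n : ℕ} {u v : Fin n → P} (h : u ≠ v) :
    ∃ i, Disjoint (u i : Set X) (v i) := by
  obtain ⟨i, hi⟩ := Function.ne_iff.1 h
  exact ⟨i, disjoint_iff_inter_eq_empty.2 <|
    hP.2.2 _ (u i).2 _ (v i).2 (Subtype.coe_injective.ne hi)⟩

theorem IsFinBorelPartition.pairwise_disjoint_joinCell [MeasurableSpace X]
    {P : Finset (Set X)} (hP : IsFinBorelPartition P) (f : X → X) (n : ℕ) :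
    Pairwise (Disjoint on fun (u : Fin n → P) => joinCell f fun i => (u i : Set X)) :=
    fun _ _ h => by
  obtain ⟨i, hi⟩ := hP.exists_disjoint_of_ne h
  exact disjoint_joinCell i hi

theorem IsFinBorelPartition.pairwise_disjoint_joinCell_preimage [MeasurableSpace Y]
    {P : Finset (Set Y)} (hP : IsFinBorelPartition P) (f : X → X) (g : X → Y) (n : ℕ) :
    Pairwise (Disjoint on fun (u : Fin n → P) => joinCell f fun i => g ⁻¹' u i) :=
    fun _ _ h => by
  obtain ⟨i, hi⟩ := hP.exists_disjoint_of_ne h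
  exact disjoint_joinCell i (hi.preimage g)

theorem IsFinBorelPartition.preimage [MeasurableSpace X] [MeasurableSpace Y]
    [DecidableEq (Set X)] {P : Finset (Set Y)} (hP : IsFinBorelPartition P) {g : X → Y}
    (hg : Measurable g) : IsFinBorelPartition (P.image (g ⁻¹' ·)) := by
  refine ⟨?_, ?_, ?_⟩
  · simp only [Finset.mem_image, forall_exists_index, and_imp, forall_apply_eq_imp_iff₂]
    exact fun A hA => hg (hP.1 A hA)
  · rw [Finset.coe_image, sUnion_image, ← preimage_sUnion, hP.2.1, preimage_univ]
  · simp only [Finset.mem_image, forall_exists_index, and_imp, forall_apply_eq_imp_iff₂]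
    intro A hA B hB hAB
    rw [← preimage_inter, hP.2.2 A hA B hB (ne_of_apply_ne _ hAB), preimage_empty]

theorem IsFinBorelPartition.insert_compl_range_image [MeasurableSpace X] [MeasurableSpace Y]
    [DecidableEq (Set Y)] {Q : Finset (Set X)} (hQ : IsFinBorelPartition Q) {g : X → Y}
    (hg : MeasurableEmbedding g) : IsFinBorelPartition (insert (range g)ᶜ (Q.image (g '' ·))) := by
  have disjoint_compl_range (A : Set X) : (range g)ᶜ ∩ g '' A = ∅ :=
    disjoint_iff_inter_eq_empty.1 (disjoint_compl_left.mono_right (image_subset_range g A))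
  refine ⟨?_, ?_, ?_⟩
  · simp only [Finset.mem_insert, Finset.mem_image, forall_eq_or_imp, forall_exists_index,
      and_imp, forall_apply_eq_imp_iff₂]
    exact ⟨hg.measurableSet_range.compl, fun A hA => hg.measurableSet_image' (hQ.1 A hA)⟩
  · rw [Finset.coe_insert, sUnion_insert, Finset.coe_image, ← image_sUnion, hQ.2.1, image_univ,
      compl_union_self]
  · simp only [Finset.mem_insert, Finset.mem_image]
    rintro _ (rfl | ⟨A, hA, rfl⟩) _ (rfl | ⟨B, hB, rfl⟩) hAB
    · exact absurd rfl hAB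
    · exact disjoint_compl_range B
    · rw [inter_comm]; exact disjoint_compl_range A
    · rw [← image_inter hg.injective, hQ.2.2 A hA B hB (ne_of_apply_ne _ hAB), image_empty]

theorem phiEnt_measure_nonneg [MeasurableSpace X] (μ : Measure X) [IsProbabilityMeasure μ]
    (s : Set X) : 0 ≤ phiEnt (μ s).toReal :=
  phiEnt_nonneg toReal_nonneg measureReal_le_one

theorem sum_phiEnt_measure_inter_singleton_le_one [MeasurableSpace Y] {ι : Type*} [Fintype ι]
    (ν : Measure Y) [IsProbabilityMeasure ν] {C : ι → Set Y} (hC : Pairwise (Disjoint on C))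
    (p : Y) : ∑ k, phiEnt (ν (C k ∩ {p})).toReal ≤ 1 := by
  by_cases h : ∃ k, p ∈ C k
  · obtain ⟨k, hk⟩ := h
    rw [Fintype.sum_eq_single k fun k' hk' => ?_]
    · exact phiEnt_le_one toReal_nonneg
    · rw [inter_singleton_eq_empty.2 fun hk'' => (hC hk').ne_of_mem hk'' hk rfl]
      simp [phiEnt]
  · simp only [not_exists] at h
    simp [inter_singleton_eq_empty.2 (h _), phiEnt]

theorem measEnt_le_measEnt_map [MeasurableSpace X] [MeasurableSpace Y] {f : X → X} {F : Y → Y}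
    {g : X → Y} (hg : MeasurableEmbedding g) (h : Semiconj g f F) (μ : Measure X)
    [IsProbabilityMeasure μ] : measEnt μ f ≤ measEnt (μ.map g) F := by
  classical
  have : IsProbabilityMeasure (μ.map g) :=
    Measure.isProbabilityMeasure_map hg.measurable.aemeasurable
  refine iSup₂_le fun Q hQ => le_iSup₂_of_le _ (hQ.insert_compl_range_image hg) <|
    limsup_ofReal_div_le_of_le_add 0 fun n => ?_
  let e (u : Fin n → Q) (i : Fin n) : (insert (range g)ᶜ (Q.image (g '' ·)) : Finset (Set Y)) :=
    ⟨g '' u i, Finset.mem_insert_of_mem (Finset.mem_image_of_mem _ (u i).2)⟩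
  have map_joinCell (u : Fin n → Q) :
      μ.map g (joinCell F fun i => (e u i : Set Y)) = μ (joinCell f fun i => (u i : Set X)) := by
    rw [hg.map_apply, preimage_joinCell h]
    simp only [e, preimage_image_eq _ hg.injective]
  rw [add_zero, partEntSum_eq_sum_joinCell, partEntSum_eq_sum_joinCell]
  simp only [← map_joinCell]
  refine Fintype.sum_comp_le_sum e
    (G := fun v => phiEnt (μ.map g (joinCell F fun i => (v i : Set Y))).toReal)
    (fun _ => phiEnt_measure_nonneg _ _) fun u v _ huv => ?_
  funext i
  exact Subtype.ext (image_injective.2 hg.injective (congrArg Subtype.val (congrFun huv i)))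

theorem sum_phiEnt_joinCell_preimage_le [MeasurableSpace X] [MeasurableSpace Y]
    [DecidableEq (Set X)] (μ : Measure X) [IsProbabilityMeasure μ] (f : X → X) {g : X → Y}
    {P : Finset (Set Y)} (hP : IsFinBorelPartition P) (n : ℕ) :
    ∑ u : Fin n → P, phiEnt (μ (joinCell f fun i => g ⁻¹' u i)).toReal ≤
      partEntSum μ f (P.image (g ⁻¹' ·)) n := by
  let e (u : Fin n → P) (i : Fin n) : P.image (g ⁻¹' ·) :=
    ⟨g ⁻¹' u i, Finset.mem_image_of_mem _ (u i).2⟩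
  refine Fintype.sum_comp_le_sum e
    (G := fun v => phiEnt (μ (joinCell f fun i => (v i : Set X))).toReal)
    (fun _ => phiEnt_measure_nonneg _ _) fun u v hu huv => ?_
  by_contra hne
  have hdisj :
      Disjoint (joinCell f fun j => (e u j : Set X)) (joinCell f fun j => (e v j : Set X)) :=
    hP.pairwise_disjoint_joinCell_preimage f g n hne
  rw [huv, disjoint_self, bot_eq_empty] at hdisj
  rw [huv, hdisj] at hu
  simp [phiEnt] at hu

theorem partEntSum_le_one_add_sum_diff_singleton [MeasurableSpace Y] (ν : Measure Y)
    [IsProbabilityMeasure ν] (F : Y → Y) {P : Finset (Set Y)} (hP : IsFinBorelPartition P)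
    {p : Y} (hp : MeasurableSet {p}) (n : ℕ) :
    partEntSum ν F P n ≤
      1 + ∑ u : Fin n → P, phiEnt (ν ((joinCell F fun i => (u i : Set Y)) \ {p})).toReal := by
  rw [partEntSum_eq_sum_joinCell]
  refine (Finset.sum_le_sum fun u _ => ?_).trans <| (Finset.sum_add_distrib).trans_le <|
    add_le_add_left (sum_phiEnt_measure_inter_singleton_le_one ν
      (hP.pairwise_disjoint_joinCell F n) p) _
  rw [← measure_inter_add_sdiff _ hp, toReal_add (measure_ne_top _ _) (measure_ne_top _ _)]
  exact phiEnt_add_le toReal_nonneg toReal_nonneg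

namespace OnePoint

@[simp]
theorem onePointExtend_coe (f : X → X) (x : X) : onePointExtend f x = f x :=
  rfl

@[simp]
theorem onePointExtend_infty (f : X → X) : onePointExtend f infty = infty :=
  rfl

theorem semiconj_coe_onePointExtend (f : X → X) :
    Semiconj ((↑) : X → OnePoint X) f (onePointExtend f) :=
  onePointExtend_coe f

theorem onePointExtend_eq_extend (f : X → X) :
    onePointExtend f = extend (↑) (fun x => (f x : OnePoint X)) fun _ => infty := by
  funext p
  induction p using OnePoint.rec with
  | infty => exact (extend_apply' (fun x => (f x : OnePoint X)) (fun _ => infty) infty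
    (by rintro ⟨x, hx⟩; exact coe_ne_infty x hx)).symm
  | coe x => exact (coe_injective.extend_apply (fun x => (f x : OnePoint X)) _ x).symm

theorem onePointExtend_preimage_image_coe (f : X → X) (A : Set X) :
    onePointExtend f ⁻¹' ((↑) '' A) = (↑) '' (f ⁻¹' A) := by
  ext p
  induction p using OnePoint.rec <;> simp

variable [TopologicalSpace X] [MeasurableSpace (OnePoint X)] [BorelSpace (OnePoint X)]

theorem measurableSet_infty : MeasurableSet {(infty : OnePoint X)} :=
  isClosed_infty.measurableSet

theorem measEnt_onePointExtend_eq_zero (f : X → X) (ν : Measure (OnePoint X))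
    [IsProbabilityMeasure ν] (hs : ν {infty}ᶜ = 0) : measEnt ν (onePointExtend f) = 0 := by
  refine le_antisymm (iSup₂_le fun P hP => ?_) zero_le
  have hdiff (C : Set (OnePoint X)) : ν (C \ {infty}) = 0 :=
    measure_mono_null (sdiff_subset_compl C _) hs
  calc _ ≤ atTop.limsup (fun n : ℕ => ENNReal.ofReal 0 / n) :=
        limsup_ofReal_div_le_of_le_add 1 fun n =>
          (partEntSum_le_one_add_sum_diff_singleton ν _ hP measurableSet_infty n).trans_eq
            (by simp [hdiff, phiEnt])
    _ = 0 := by simp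

variable [MeasurableSpace X] [BorelSpace X]

theorem measurableEmbedding_coe : MeasurableEmbedding ((↑) : X → OnePoint X) :=
  isOpenEmbedding_coe.measurableEmbedding

theorem measurable_onePointExtend {f : X → X} (hf : Measurable f) :
    Measurable (onePointExtend f) := by
  rw [onePointExtend_eq_extend]
  exact measurableEmbedding_coe.measurable_extend (measurableEmbedding_coe.measurable.comp hf)
    measurable_const

noncomputable def comapNormalized (ν : Measure (OnePoint X)) : Measure X :=
  (ν {infty}ᶜ)⁻¹ • ν.comap (↑)

theorem comapNormalized_apply (ν : Measure (OnePoint X)) (S : Set X) :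
    comapNormalized ν S = (ν {infty}ᶜ)⁻¹ * ν ((↑) '' S) := by
  rw [comapNormalized, Measure.smul_apply, measurableEmbedding_coe.comap_apply, smul_eq_mul]

theorem isProbabilityMeasure_comapNormalized (ν : Measure (OnePoint X)) [IsFiniteMeasure ν]
    (hs : ν {infty}ᶜ ≠ 0) : IsProbabilityMeasure (comapNormalized ν) :=
  ⟨by rw [comapNormalized_apply, image_univ, ← compl_infty,
    ENNReal.inv_mul_cancel hs (measure_ne_top _ _)]⟩

theorem map_comapNormalized {f : X → X} (hf : Measurable f) {ν : Measure (OnePoint X)}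
    (hν : ν.map (onePointExtend f) = ν) : (comapNormalized ν).map f = comapNormalized ν := by
  ext S hS
  rw [Measure.map_apply hf hS, comapNormalized_apply, comapNormalized_apply,
    ← onePointExtend_preimage_image_coe, ← Measure.map_apply (measurable_onePointExtend hf)
      (measurableEmbedding_coe.measurableSet_image' hS), hν]

theorem measure_diff_infty (ν : Measure (OnePoint X)) [IsFiniteMeasure ν]
    (hs : ν {infty}ᶜ ≠ 0) (C : Set (OnePoint X)) :
    ν (C \ {infty}) = ν {infty}ᶜ * comapNormalized ν ((↑) ⁻¹' C) := by
  rw [comapNormalized_apply, ← mul_assoc, ENNReal.mul_inv_cancel hs (measure_ne_top _ _), one_mul,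
    image_preimage_eq_inter_range, ← compl_infty, sdiff_eq]

theorem sum_phiEnt_joinCell_diff_infty_le [DecidableEq (Set X)] {f : X → X} (hf : Measurable f)
    (ν : Measure (OnePoint X)) [IsProbabilityMeasure ν] (hs : ν {infty}ᶜ ≠ 0)
    {P : Finset (Set (OnePoint X))} (hP : IsFinBorelPartition P) (n : ℕ) :
    ∑ u : Fin n → P, phiEnt
        (ν ((joinCell (onePointExtend f) fun i => (u i : Set (OnePoint X))) \ {infty})).toReal
      ≤ partEntSum (comapNormalized ν) f (P.image ((↑) ⁻¹' ·)) n + 1 := by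
  have := isProbabilityMeasure_comapNormalized ν hs
  set μ := comapNormalized ν with hμ
  set q : (Fin n → P) → ℝ :=
    fun u => (μ (joinCell f fun i => (↑) ⁻¹' (u i : Set (OnePoint X)))).toReal
  have sum_q : ∑ u, q u ≤ 1 := by
    rw [← toReal_sum fun u _ => measure_ne_top _ _]
    refine toReal_le_of_le_ofReal zero_le_one ?_
    rw [ofReal_one, ← measure_univ (μ := μ)]
    exact sum_measure_le_measure_univ (fun u _ => (measurableSet_joinCell hf fun i =>
      measurableEmbedding_coe.measurable (hP.1 _ (u i).2)).nullMeasurableSet)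
      fun u _ v _ huv => (hP.pairwise_disjoint_joinCell_preimage f _ n huv).aedisjoint
  calc _ = ∑ u, phiEnt ((ν {infty}ᶜ).toReal * q u) := by
        simp only [measure_diff_infty ν hs, preimage_joinCell (semiconj_coe_onePointExtend f),
          toReal_mul, q, ← hμ]
    _ ≤ ∑ u, (phiEnt (q u) + q u) := Finset.sum_le_sum fun u _ =>
        phiEnt_mul_le toReal_nonneg measureReal_le_one toReal_nonneg measureReal_le_one
    _ = ∑ u, phiEnt (q u) + ∑ u, q u := Finset.sum_add_distrib
    _ ≤ _ := add_le_add (sum_phiEnt_joinCell_preimage_le μ f hP n) sum_q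

theorem measEnt_onePointExtend_le {f : X → X} (hf : Measurable f) (ν : Measure (OnePoint X))
    [IsProbabilityMeasure ν] (hs : ν {infty}ᶜ ≠ 0) :
    measEnt ν (onePointExtend f) ≤ measEnt (comapNormalized ν) f := by
  classical
  refine iSup₂_le fun P hP => le_iSup₂_of_le _ (hP.preimage measurableEmbedding_coe.measurable) <|
    limsup_ofReal_div_le_of_le_add 2 fun n => ?_
  linarith [partEntSum_le_one_add_sum_diff_singleton ν (onePointExtend f) hP measurableSet_infty n,
    sum_phiEnt_joinCell_diff_infty_le hf ν hs hP n]

end OnePoint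

end

open MeasureTheory in
theorem iSup_measEnt_eq_onePoint_general {X : Type*} [MetricSpace X]
    [MeasurableSpace X] [BorelSpace X]
    [MeasurableSpace (OnePoint X)] [BorelSpace (OnePoint X)]
    (f : X → X) (hf : IsPerfectMap f) :
    (⨆ (μ : Measure X) (_ : IsProbabilityMeasure μ ∧ μ.map f = μ), measEnt μ f) =
    (⨆ (ν : Measure (OnePoint X))
        (_ : IsProbabilityMeasure ν ∧ ν.map (onePointExtend f) = ν),
      measEnt ν (onePointExtend f)) := by
  have hfm : Measurable f := hf.1.measurable
  have hι := OnePoint.measurableEmbedding_coe (X := X)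
  have hsemi := OnePoint.semiconj_coe_onePointExtend f
  apply le_antisymm
  · refine iSup₂_le fun μ ⟨hμ, hμf⟩ => ?_
    have hinv : (μ.map (↑)).map (onePointExtend f) = μ.map ((↑) : X → OnePoint X) := by
      rw [Measure.map_map (OnePoint.measurable_onePointExtend hfm) hι.measurable, ← hsemi.comp_eq,
        ← Measure.map_map hι.measurable hfm, hμf]
    exact le_iSup₂_of_le _ ⟨Measure.isProbabilityMeasure_map hι.measurable.aemeasurable, hinv⟩
      (measEnt_le_measEnt_map hι hsemi μ)
  · refine iSup₂_le fun ν ⟨hν, hνf⟩ => ?_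
    by_cases hs : ν {OnePoint.infty}ᶜ = 0
    · rw [OnePoint.measEnt_onePointExtend_eq_zero f ν hs]
      exact zero_le
    · exact le_iSup₂_of_le _ ⟨OnePoint.isProbabilityMeasure_comapNormalized ν hs,
        OnePoint.map_comapNormalized hfm hνf⟩ (OnePoint.measEnt_onePointExtend_le hfm ν hs)

open MeasureTheory in
/-- For a perfect map `f` on a locally compact separable metric space admitting an
invariant Borel probability measure, the supremum of the measure-theoretic entropies of `f`
equals that of its extension `f̃` to the one-point compactification. -/
theorem iSup_measEnt_eq_onePoint {X : Type*} [MetricSpace X] [LocallyCompactSpace X]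
    [TopologicalSpace.SeparableSpace X] [MeasurableSpace X] [BorelSpace X]
    [MeasurableSpace (OnePoint X)] [BorelSpace (OnePoint X)]
    (f : X → X) (hf : IsPerfectMap f)
    (hne : ∃ μ : Measure X, IsProbabilityMeasure μ ∧ μ.map f = μ) :
    (⨆ (μ : Measure X) (_ : IsProbabilityMeasure μ ∧ μ.map f = μ), measEnt μ f) =
    (⨆ (ν : Measure (OnePoint X))
        (_ : IsProbabilityMeasure ν ∧ ν.map (onePointExtend f) = ν),
      measEnt ν (onePointExtend f)) :=
  iSup_measEnt_eq_onePoint_general f hf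
end
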